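/- arXiv:0903.1846 — 5 statements merged into one kernel-verified Lean document; each statement's English description precedes it below -/
import Mathlib

section
/- For sets A, B ⊆ ℝ^d with nonempty boundaries: b_A ≤ b_B everywhere if and only if cl(B) ⊆ cl(A) and cl(A^c) ⊆ cl(B^c). -/
noncomputable def bODF {d : ℕ} (A : Set (EuclideanSpace ℝ (Fin d)))
    (x : EuclideanSpace ℝ (Fin d)) : ℝ :=
  Metric.infDist x A - Metric.infDist x Aᶜ

theorem stmt3 {d : ℕ} (A B : Set (EuclideanSpace ℝ (Fin d)))
    (hA : (frontier A).Nonempty) (hB : (frontier B).Nonempty) :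
    (∀ x, bODF A x ≤ bODF B x) ↔
      (closure B ⊆ closure A ∧ closure Aᶜ ⊆ closure Bᶜ) := by
  have hAne : A.Nonempty := by
    rw [← closure_nonempty_iff]; exact hA.mono (frontier_subset_closure)
  have hAcne : Aᶜ.Nonempty := by
    rw [← closure_nonempty_iff]
    exact hA.mono (by rw [← frontier_compl]; exact frontier_subset_closure)
  have hBne : B.Nonempty := by
    rw [← closure_nonempty_iff]; exact hB.mono (frontier_subset_closure)
  have hBcne : Bᶜ.Nonempty := by
    rw [← closure_nonempty_iff]
    exact hB.mono (by rw [← frontier_compl]; exact frontier_subset_closure)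
  constructor
  · intro h
    constructor
    · intro x hx
      by_contra hxA
      have h1 : 0 < Metric.infDist x A := by
        rw [← Metric.infDist_closure]
        exact (isClosed_closure.notMem_iff_infDist_pos hAne.closure).1 hxA
      have h2 : Metric.infDist x Aᶜ = 0 := by
        apply Metric.infDist_zero_of_mem_closure
        exact subset_closure (fun hxa => hxA (subset_closure hxa))
      have h3 : Metric.infDist x B = 0 := Metric.infDist_zero_of_mem_closure hx
      have := h x
      simp only [bODF, h2, h3] at this
      have h4 : (0:ℝ) ≤ Metric.infDist x Bᶜ := Metric.infDist_nonneg
      linarith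
    · intro x hx
      by_contra hxB
      have h1 : 0 < Metric.infDist x Bᶜ := by
        rw [← Metric.infDist_closure]
        exact (isClosed_closure.notMem_iff_infDist_pos hBcne.closure).1 hxB
      have h2 : Metric.infDist x B = 0 := by
        apply Metric.infDist_zero_of_mem_closure
        exact subset_closure (by
          by_contra hxb
          exact hxB (subset_closure hxb))
      have h3 : Metric.infDist x Aᶜ = 0 := Metric.infDist_zero_of_mem_closure hx
      have := h x
      simp only [bODF, h2, h3] at this
      have h4 : (0:ℝ) ≤ Metric.infDist x A := Metric.infDist_nonneg
      linarith
  · rintro ⟨h1, h2⟩ x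
    have e1 : Metric.infDist x A ≤ Metric.infDist x B := by
      rw [← Metric.infDist_closure, ← Metric.infDist_closure (s := B)]
      exact Metric.infDist_le_infDist_of_subset h1 hBne.closure
    have e2 : Metric.infDist x Bᶜ ≤ Metric.infDist x Aᶜ := by
      rw [← Metric.infDist_closure, ← Metric.infDist_closure (s := Aᶜ)]
      exact Metric.infDist_le_infDist_of_subset h2 hAcne.closure
    simp only [bODF]
    linarith
end

section
/- If A ⊆ ℝ^d is convex with nonempty boundary, then the oriented distance function b_A is a convex function on ℝ^d. -/
open Metric Set
open scoped RealInnerProductSpace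

section Aux

variable {d : ℕ}

/-- Every affine minorant coming from a supporting halfspace minorizes `bODF`. -/
lemma bODF_lower (A : Set (EuclideanSpace ℝ (Fin d))) (hA : A.Nonempty)
    {u : EuclideanSpace ℝ (Fin d)} (hu : ‖u‖ = 1) {c : ℝ}
    (hc : ∀ w ∈ A, ⟪w, u⟫ ≤ c) (w : EuclideanSpace ℝ (Fin d)) :
    ⟪w, u⟫ - c ≤ bODF A w := by
  by_cases hw : w ∈ A
  · have h1 : Metric.infDist w A = 0 := Metric.infDist_zero_of_mem hw
    have h2 : Metric.infDist w Aᶜ ≤ c - ⟪w, u⟫ := by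
      refine le_of_forall_pos_le_add fun ε hε => ?_
      set t : ℝ := c - ⟪w, u⟫ with ht_def
      have ht : 0 ≤ t := sub_nonneg.2 (hc w hw)
      have hq : w + (t + ε) • u ∈ Aᶜ := by
        intro hmem
        have h3 := hc _ hmem
        have h4 : ⟪w + (t + ε) • u, u⟫ = ⟪w, u⟫ + (t + ε) := by
          rw [inner_add_left, real_inner_smul_left, real_inner_self_eq_norm_sq, hu]
          ring
        rw [h4] at h3
        linarith
      calc Metric.infDist w Aᶜ ≤ dist w (w + (t + ε) • u) :=
            Metric.infDist_le_dist_of_mem hq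
        _ = t + ε := by
            rw [dist_eq_norm]
            simp [norm_smul, hu, abs_of_nonneg (by linarith : (0:ℝ) ≤ t + ε)]
    unfold bODF
    rw [h1]
    linarith
  · have h2 : Metric.infDist w Aᶜ = 0 := Metric.infDist_zero_of_mem hw
    have h1 : ⟪w, u⟫ - c ≤ Metric.infDist w A := by
      by_contra h
      push_neg at h
      obtain ⟨q, hq, hlt⟩ := (Metric.infDist_lt_iff hA).1 h
      have h3 : ⟪w, u⟫ - ⟪q, u⟫ ≤ ‖w - q‖ := by
        calc ⟪w, u⟫ - ⟪q, u⟫ = ⟪w - q, u⟫ := by rw [inner_sub_left]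
          _ ≤ ‖w - q‖ * ‖u‖ := real_inner_le_norm _ _
          _ = ‖w - q‖ := by rw [hu, mul_one]
      have hq' := hc q hq
      rw [dist_eq_norm] at hlt
      linarith
    unfold bODF
    linarith

/-- A convex set with nonempty interior is contained in the closure of its interior. -/
lemma subset_closure_interior' {A : Set (EuclideanSpace ℝ (Fin d))} (hconv : Convex ℝ A)
    (hint : (interior A).Nonempty) : A ⊆ closure (interior A) := by
  obtain ⟨w₀, hw₀⟩ := hint
  intro w hw
  have htend : Filter.Tendsto (fun t : ℝ => t • w₀ + (1 - t) • w) (nhdsWithin 0 (Set.Ioi 0))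
      (nhds w) := by
    have hcont : Continuous (fun t : ℝ => t • w₀ + (1 - t) • w) := by fun_prop
    have := hcont.tendsto 0
    simp only [zero_smul, sub_zero, one_smul, zero_add] at this
    exact this.mono_left nhdsWithin_le_nhds
  refine mem_closure_of_tendsto htend ?_
  filter_upwards [Ioo_mem_nhdsGT_of_mem (Set.mem_Ico.2 ⟨le_refl 0, zero_lt_one⟩)] with t ht
  exact hconv.combo_interior_closure_mem_interior hw₀ (subset_closure hw) ht.1
    (by linarith [ht.2]) (by ring)

/-- Existence of a supporting affine function touching `bODF` from below at `z`. -/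
lemma bODF_exists_support {A : Set (EuclideanSpace ℝ (Fin d))} (hconv : Convex ℝ A)
    (hbd : (frontier A).Nonempty) (hint : (interior A).Nonempty)
    (z : EuclideanSpace ℝ (Fin d)) :
    ∃ u c, ‖u‖ = 1 ∧ (∀ w ∈ A, ⟪w, u⟫ ≤ c) ∧ bODF A z ≤ ⟪z, u⟫ - c := by
  obtain ⟨p₀, hp₀⟩ := hbd
  rw [frontier, Set.mem_diff] at hp₀
  have hAne : A.Nonempty := by
    rcases A.eq_empty_or_nonempty with h | h
    · rw [h] at hp₀; simp at hp₀
    · exact h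
  have hclAne : (closure A).Nonempty := hAne.closure
  by_cases hz : z ∈ closure A
  · by_cases hz2 : z ∈ interior A
    · -- z in the interior: nearest point of (interior A)ᶜ
      set S : Set (EuclideanSpace ℝ (Fin d)) := (interior A)ᶜ with hS_def
      have hSclosed : IsClosed S := isOpen_interior.isClosed_compl
      have hSne : S.Nonempty := ⟨p₀, hp₀.2⟩
      obtain ⟨p, hpS, hpd⟩ := hSclosed.exists_infDist_eq_dist hSne z
      have hD0 : 0 < dist z p := by
        rcases eq_or_lt_of_le (dist_nonneg (x := z) (y := p)) with h | h
        · exfalso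
          have : z = p := by rw [dist_eq_zero.1 h.symm]
          exact hpS (this ▸ hz2)
        · exact h
      set D : ℝ := dist z p with hD_def
      have hnormv : ‖p - z‖ = D := by rw [hD_def, dist_eq_norm, norm_sub_rev]
      set u : EuclideanSpace ℝ (Fin d) := ‖p - z‖⁻¹ • (p - z) with hu_def
      have hu : ‖u‖ = 1 := by
        rw [hu_def, norm_smul, norm_inv, norm_norm,
          inv_mul_cancel₀ (by rw [hnormv]; exact hD0.ne')]
      have hvu : ⟪p - z, u⟫ = D := by
        rw [hu_def, real_inner_smul_right, real_inner_self_eq_norm_sq, hnormv]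
        field_simp
      have hball : Metric.ball z D ⊆ interior A := by
        intro q hq
        by_contra hq'
        have h5 : Metric.infDist z S ≤ dist z q := Metric.infDist_le_dist_of_mem hq'
        rw [hpd] at h5
        have h6 : dist z q < D := by rw [dist_comm]; exact Metric.mem_ball.1 hq
        linarith
      have hsupp : ∀ w ∈ A, ⟪w, u⟫ ≤ ⟪p, u⟫ := by
        by_contra hcon
        push_neg at hcon
        obtain ⟨w, hw, hgt⟩ := hcon
        set δ : ℝ := ⟪w, u⟫ - ⟪p, u⟫ with hδ_def
        have hδ0 : 0 < δ := sub_pos.2 hgt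
        set t : ℝ := min (1/2) (D * δ / (‖z - w‖^2 + 1)) with ht_def
        have ht0 : 0 < t := lt_min (by norm_num)
          (div_pos (mul_pos hD0 hδ0) (by positivity))
        have ht1 : t < 1 := lt_of_le_of_lt (min_le_left _ _) (by norm_num)
        -- key inequality
        have hkey : ‖p - (t • w + (1 - t) • z)‖ < (1 - t) * D := by
          have hvzw : ⟪p - z, z - w⟫ = -D^2 - D*δ := by
            have h1 : ⟪p - z, z - p⟫ = -(D^2) := by
              rw [show z - p = -(p - z) by abel, inner_neg_right,
                real_inner_self_eq_norm_sq, hnormv]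
            have h2 : ⟪p - z, p - w⟫ = -(D * δ) := by
              have : ⟪p - z, w - p⟫ = D * δ := by
                have hw' : ⟪w - p, u⟫ = δ := by
                  rw [inner_sub_left, hδ_def]
                have hnz : ‖p - z‖ ≠ 0 := by rw [hnormv]; exact hD0.ne'
                have : ⟪w - p, p - z⟫ = ‖p - z‖ * ⟪w - p, u⟫ := by
                  rw [hu_def, real_inner_smul_right, ← mul_assoc,
                    mul_inv_cancel₀ hnz, one_mul]
                rw [real_inner_comm]
                rw [this, hw', hnormv]
              rw [show p - w = -(w - p) by abel, inner_neg_right, this]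
            calc ⟪p - z, z - w⟫ = ⟪p - z, z - p⟫ + ⟪p - z, p - w⟫ := by
                  rw [← inner_add_right]; congr 1; abel
              _ = -D^2 - D*δ := by rw [h1, h2]; ring
          have hexp : ‖p - (t • w + (1 - t) • z)‖^2
              = D^2 + 2 * t * ⟪p - z, z - w⟫ + t^2 * ‖z - w‖^2 := by
            have : p - (t • w + (1 - t) • z) = (p - z) + t • (z - w) := by
              module
            rw [this, @norm_add_sq_real, real_inner_smul_right, norm_smul, hnormv,
              Real.norm_of_nonneg ht0.le, mul_pow]
            ring
          have hbound : t * (‖z - w‖^2 + 1) ≤ D * δ := by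
            rw [ht_def]
            calc min (1/2) (D * δ / (‖z - w‖^2 + 1)) * (‖z - w‖^2 + 1)
                ≤ (D * δ / (‖z - w‖^2 + 1)) * (‖z - w‖^2 + 1) := by
                  apply mul_le_mul_of_nonneg_right (min_le_right _ _) (by positivity)
              _ = D * δ := by field_simp
          have hsq : ‖p - (t • w + (1 - t) • z)‖^2 < ((1 - t) * D)^2 := by
            rw [hexp, hvzw]
            nlinarith [ht0, hδ0, hD0, hbound]
          have h1tD : 0 ≤ (1 - t) * D := mul_nonneg (by linarith) hD0.le
          nlinarith [norm_nonneg (p - (t • w + (1 - t) • z)), hsq, h1tD]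
        -- hence p ∈ interior A : contradiction
        apply hpS
        refine mem_interior.2 ⟨Metric.ball (t • w + (1 - t) • z) ((1 - t) * D), ?_,
          Metric.isOpen_ball, ?_⟩
        · intro q hq
          have h1t : (0:ℝ) < 1 - t := by linarith
          have hq' : (1 - t)⁻¹ • (q - t • w) ∈ Metric.ball z D := by
            rw [Metric.mem_ball, dist_eq_norm]
            have : (1 - t)⁻¹ • (q - t • w) - z = (1 - t)⁻¹ • (q - (t • w + (1 - t) • z)) := by
              match_scalars <;> field_simp
            rw [this, norm_smul, norm_inv, Real.norm_of_nonneg h1t.le]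
            rw [Metric.mem_ball, dist_eq_norm] at hq
            rw [inv_mul_lt_iff₀ h1t]
            exact hq
          have hq'' : (1 - t)⁻¹ • (q - t • w) ∈ A := interior_subset (hball hq')
          have : q = t • w + (1 - t) • ((1 - t)⁻¹ • (q - t • w)) := by
            rw [smul_smul, mul_inv_cancel₀ h1t.ne', one_smul]
            abel
          rw [this]
          exact hconv hw hq'' ht0.le h1t.le (by ring)
        · rw [Metric.mem_ball, dist_eq_norm]
          exact hkey
      refine ⟨u, ⟪p, u⟫, hu, hsupp, ?_⟩
      have hiA : Metric.infDist z A = 0 := Metric.infDist_zero_of_mem_closure hz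
      have hiAc : Metric.infDist z Aᶜ = D := by
        rw [← Metric.infDist_closure, closure_compl, ← hS_def, hpd]
      have : ⟪z, u⟫ - ⟪p, u⟫ = -D := by
        rw [← inner_sub_left, show z - p = -(p - z) by abel, inner_neg_left, hvu]
      rw [this]
      unfold bODF
      rw [hiA, hiAc]
      linarith
    · -- z on the boundary: Hahn-Banach separation of interior A from z
      obtain ⟨f, hf⟩ := geometric_hahn_banach_open_point (hconv.interior) isOpen_interior hz2
      set u₀ : EuclideanSpace ℝ (Fin d) := (InnerProductSpace.toDual ℝ _).symm f with hu₀_def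
      have hfu₀ : ∀ w, f w = ⟪u₀, w⟫ := by
        intro w
        rw [hu₀_def, InnerProductSpace.toDual_symm_apply]
      have hu₀ne : u₀ ≠ 0 := by
        intro h
        obtain ⟨w₀, hw₀⟩ := hint
        have := hf w₀ hw₀
        rw [hfu₀ w₀, hfu₀ z, h] at this
        simp at this
      set u : EuclideanSpace ℝ (Fin d) := ‖u₀‖⁻¹ • u₀ with hu_def
      have hu : ‖u‖ = 1 := by
        rw [hu_def, norm_smul, norm_inv, norm_norm,
          inv_mul_cancel₀ (norm_ne_zero_iff.2 hu₀ne)]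
      have hle : ∀ w ∈ A, ⟪w, u₀⟫ ≤ ⟪z, u₀⟫ := by
        have hsub : A ⊆ {v | ⟪v, u₀⟫ ≤ ⟪z, u₀⟫} := by
          have hC : IsClosed {v : EuclideanSpace ℝ (Fin d) | ⟪v, u₀⟫ ≤ ⟪z, u₀⟫} := by
            apply isClosed_le
            · exact (continuous_id.inner continuous_const)
            · exact continuous_const
          have hIC : interior A ⊆ {v | ⟪v, u₀⟫ ≤ ⟪z, u₀⟫} := by
            intro v hv
            have := hf v hv
            rw [hfu₀ v, hfu₀ z] at this
            simp only [Set.mem_setOf_eq]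
            rw [real_inner_comm u₀ v, real_inner_comm u₀ z]
            exact this.le
          calc A ⊆ closure (interior A) := subset_closure_interior' hconv hint
            _ ⊆ {v | ⟪v, u₀⟫ ≤ ⟪z, u₀⟫} := closure_minimal hIC hC
        exact fun w hw => hsub hw
      refine ⟨u, ⟪z, u⟫, hu, ?_, ?_⟩
      · intro w hw
        rw [hu_def, real_inner_smul_right, real_inner_smul_right]
        exact mul_le_mul_of_nonneg_left (hle w hw) (by positivity)
      · have hiA : Metric.infDist z A = 0 := Metric.infDist_zero_of_mem_closure hz
        unfold bODF
        rw [hiA]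
        have := Metric.infDist_nonneg (x := z) (s := Aᶜ)
        simp only [sub_self]
        linarith
  · -- z outside the closure: project onto the closed convex set closure A
    have hclosed : IsClosed (closure A) := isClosed_closure
    obtain ⟨p, hp, hpd⟩ := hclosed.exists_infDist_eq_dist hclAne z
    have hD0 : 0 < ‖z - p‖ := by
      rw [norm_sub_pos_iff]
      intro h
      exact hz (h ▸ hp)
    have hiInf : ‖z - p‖ = ⨅ w : closure A, ‖z - w‖ := by
      rw [← dist_eq_norm, ← hpd, Metric.infDist_eq_iInf]
      simp only [dist_eq_norm]
    have hproj : ∀ w ∈ closure A, ⟪z - p, w - p⟫ ≤ 0 :=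
      (norm_eq_iInf_iff_real_inner_le_zero hconv.closure hp).1 hiInf
    set u : EuclideanSpace ℝ (Fin d) := ‖z - p‖⁻¹ • (z - p) with hu_def
    have hu : ‖u‖ = 1 := by
      rw [hu_def, norm_smul, norm_inv, norm_norm, inv_mul_cancel₀ hD0.ne']
    refine ⟨u, ⟪p, u⟫, hu, ?_, ?_⟩
    · intro w hw
      have h1 : ⟪w - p, u⟫ ≤ 0 := by
        rw [hu_def, real_inner_smul_right]
        rw [real_inner_comm]
        exact mul_nonpos_of_nonneg_of_nonpos (by positivity)
          (hproj w (subset_closure hw))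
      rw [inner_sub_left] at h1
      linarith
    · have h2 : ⟪z, u⟫ - ⟪p, u⟫ = ‖z - p‖ := by
        rw [← inner_sub_left, hu_def, real_inner_smul_right,
          real_inner_self_eq_norm_sq]
        field_simp
      rw [h2]
      have h3 : Metric.infDist z A = ‖z - p‖ := by
        rw [← Metric.infDist_closure, hpd, dist_eq_norm]
      unfold bODF
      rw [h3]
      have := Metric.infDist_nonneg (x := z) (s := Aᶜ)
      linarith

/-- `infDist · A` is convex for convex `A`. -/
lemma convexOn_infDist' {A : Set (EuclideanSpace ℝ (Fin d))} (hA : A.Nonempty)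
    (hconv : Convex ℝ A) :
    ConvexOn ℝ Set.univ (fun w : EuclideanSpace ℝ (Fin d) => Metric.infDist w A) := by
  refine ⟨convex_univ, fun x _ y _ a b ha hb hab => ?_⟩
  refine le_of_forall_pos_le_add fun ε hε => ?_
  obtain ⟨p, hp, hpd⟩ := (Metric.infDist_lt_iff hA).1
    (show Metric.infDist x A < Metric.infDist x A + ε by linarith)
  obtain ⟨q, hq, hqd⟩ := (Metric.infDist_lt_iff hA).1
    (show Metric.infDist y A < Metric.infDist y A + ε by linarith)
  have hmem : a • p + b • q ∈ A := hconv hp hq ha hb hab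
  calc Metric.infDist (a • x + b • y) A ≤ dist (a • x + b • y) (a • p + b • q) :=
        Metric.infDist_le_dist_of_mem hmem
    _ ≤ a * dist x p + b * dist y q := by
        rw [dist_eq_norm, dist_eq_norm, dist_eq_norm]
        calc ‖a • x + b • y - (a • p + b • q)‖ = ‖a • (x - p) + b • (y - q)‖ := by
              congr 1; module
          _ ≤ ‖a • (x - p)‖ + ‖b • (y - q)‖ := norm_add_le _ _
          _ = a * ‖x - p‖ + b * ‖y - q‖ := by
              rw [norm_smul, norm_smul, Real.norm_of_nonneg ha, Real.norm_of_nonneg hb]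
    _ ≤ a * (Metric.infDist x A + ε) + b * (Metric.infDist y A + ε) := by
        apply add_le_add
        · exact mul_le_mul_of_nonneg_left hpd.le ha
        · exact mul_le_mul_of_nonneg_left hqd.le hb
    _ = a * Metric.infDist x A + b * Metric.infDist y A + ε := by
        have : a * ε + b * ε = ε := by rw [← add_mul, hab, one_mul]
        ring_nf
        linarith [this]

end Aux

theorem stmt6 {d : ℕ} (A : Set (EuclideanSpace ℝ (Fin d)))
    (hconv : Convex ℝ A) (hbd : (frontier A).Nonempty) :
    ConvexOn ℝ Set.univ (bODF A) := by
  have hAne : A.Nonempty := by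
    obtain ⟨p₀, hp₀⟩ := hbd
    rw [frontier, Set.mem_diff] at hp₀
    rcases A.eq_empty_or_nonempty with h | h
    · rw [h] at hp₀; simp at hp₀
    · exact h
  by_cases hint : (interior A).Nonempty
  · refine ⟨convex_univ, fun x _ y _ a b ha hb hab => ?_⟩
    obtain ⟨u, c, hu, hsupp, hle⟩ := bODF_exists_support hconv hbd hint (a • x + b • y)
    have h1 : ⟪a • x + b • y, u⟫ - c
        = a * (⟪x, u⟫ - c) + b * (⟪y, u⟫ - c) := by
      rw [inner_add_left, real_inner_smul_left, real_inner_smul_left]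
      have : a * c + b * c = c := by rw [← add_mul, hab, one_mul]
      ring_nf
      linarith [this]
    calc bODF A (a • x + b • y) ≤ ⟪a • x + b • y, u⟫ - c := hle
      _ = a * (⟪x, u⟫ - c) + b * (⟪y, u⟫ - c) := h1
      _ ≤ a * bODF A x + b * bODF A y := by
          apply add_le_add
          · exact mul_le_mul_of_nonneg_left (bODF_lower A hAne hu hsupp x) ha
          · exact mul_le_mul_of_nonneg_left (bODF_lower A hAne hu hsupp y) hb
  · have hbODF : bODF A = fun w => Metric.infDist w A := by
      funext w
      unfold bODF
      have : Metric.infDist w Aᶜ = 0 := by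
        apply Metric.infDist_zero_of_mem_closure
        rw [closure_compl]
        rw [Set.not_nonempty_iff_eq_empty] at hint
        rw [hint]
        simp
      rw [this, sub_zero]
    rw [hbODF]
    exact convexOn_infDist' hAne hconv
end

section
/- If a random closed set 𝐀 satisfies U ⊆ 𝐀 ⊆ W almost surely for deterministic sets U, W, then cl(U) ⊆ E[𝐀] ⊆ cl(W), where E[𝐀] is the ODF expectation. -/
open MeasureTheory

theorem stmt14 {d : ℕ} {Ω : Type*} [MeasurableSpace Ω] (μ : Measure Ω)
    [IsProbabilityMeasure μ] (RA : Ω → Set (EuclideanSpace ℝ (Fin d)))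
    (U W : Set (EuclideanSpace ℝ (Fin d)))
    (hUbd : (frontier U).Nonempty) (hWbd : (frontier W).Nonempty)
    (hclosed : ∀ᵐ ω ∂μ, IsClosed (RA ω))
    (hbd : ∀ᵐ ω ∂μ, (frontier (RA ω)).Nonempty)
    (hint : ∀ x, Integrable (fun ω => bODF (RA ω) x) μ)
    (hUW : ∀ᵐ ω ∂μ, U ⊆ RA ω ∧ RA ω ⊆ W) :
    closure U ⊆ {x | (∫ ω, bODF (RA ω) x ∂μ) ≤ 0} ∧
    {x | (∫ ω, bODF (RA ω) x ∂μ) ≤ 0} ⊆ closure W := by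
  constructor
  · intro x hx
    simp only [Set.mem_setOf_eq]
    apply integral_nonpos_of_ae
    filter_upwards [hUW] with ω ⟨hU, _⟩
    have h1 : Metric.infDist x (RA ω) = 0 := by
      have : Metric.infDist x (RA ω) ≤ Metric.infDist x U := by
        apply Metric.infDist_le_infDist_of_subset hU
        exact closure_nonempty_iff.mp ⟨x, hx⟩
      have h0 : Metric.infDist x U = 0 := by
        rw [← Metric.infDist_closure]
        exact Metric.infDist_zero_of_mem hx
      linarith [Metric.infDist_nonneg (x := x) (s := RA ω)]
    simp [bODF, h1, Metric.infDist_nonneg]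
  · intro x hx
    by_contra hxW
    simp only [Set.mem_setOf_eq] at hx
    set c := Metric.infDist x (closure W) with hc
    have hWne : W.Nonempty := by
      rcases hWbd with ⟨y, hy⟩
      have : y ∈ closure W := frontier_subset_closure hy
      exact closure_nonempty_iff.mp ⟨y, this⟩
    have hcpos : 0 < c :=
      (isClosed_closure.notMem_iff_infDist_pos hWne.closure).mp hxW
    have hle : c ≤ ∫ ω, bODF (RA ω) x ∂μ := by
      have : ∫ (_ : Ω), c ∂μ ≤ ∫ ω, bODF (RA ω) x ∂μ := by
        apply integral_mono_ae (integrable_const c) (hint x)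
        filter_upwards [hUW, hbd, hclosed] with ω ⟨_, hW⟩ hne hcl
        have hAne : (RA ω).Nonempty := by
          rcases hne with ⟨y, hy⟩
          have : y ∈ closure (RA ω) := frontier_subset_closure hy
          exact closure_nonempty_iff.mp ⟨y, this⟩
        have h1 : c ≤ Metric.infDist x (RA ω) := by
          rw [hc, Metric.infDist_closure]
          exact Metric.infDist_le_infDist_of_subset hW hAne
        have h2 : Metric.infDist x (RA ω)ᶜ = 0 := by
          apply Metric.infDist_zero_of_mem
          intro hmem
          exact hxW (subset_closure (hW hmem))
        simp only [bODF, h2, sub_zero]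
        exact h1
      simpa using this
    linarith
end

section
/- If a random closed set 𝐀 ⊆ ℝ^d is convex almost surely (with ∂𝐀 ≠ ∅ and integrable ODF), then its ODF expectation E[𝐀] = {x : E[b_𝐀(x)] ≤ 0} is a convex set. -/
open MeasureTheory

section Helpers

open Metric

variable {E : Type*} [NormedAddCommGroup E] [NormedSpace ℝ E] [ProperSpace E]
variable {A : Set E}

/-- Points strictly within `infDist x Aᶜ` of `x` belong to `A`. -/
lemma mem_of_dist_lt_infDist_compl {x w : E} (h : dist w x < infDist x Aᶜ) : w ∈ A := by
  by_contra hw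
  have := infDist_le_dist_of_mem (x := x) (s := Aᶜ) hw
  rw [dist_comm] at h
  linarith

/-- Convexity of distance to a convex set. -/
lemma infDist_comb_le (hconv : Convex ℝ A) (hcl : IsClosed A) (hne : A.Nonempty)
    {x y : E} {a b : ℝ} (ha : 0 ≤ a) (hb : 0 ≤ b) (hab : a + b = 1) :
    infDist (a • x + b • y) A ≤ a * infDist x A + b * infDist y A := by
  obtain ⟨p, hp, hxp⟩ := hcl.exists_infDist_eq_dist hne x
  obtain ⟨q, hq, hyq⟩ := hcl.exists_infDist_eq_dist hne y
  have hz : a • p + b • q ∈ A := hconv hp hq ha hb hab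
  calc infDist (a • x + b • y) A ≤ dist (a • x + b • y) (a • p + b • q) :=
        infDist_le_dist_of_mem hz
    _ ≤ dist (a • x) (a • p) + dist (b • y) (b • q) := dist_add_add_le _ _ _ _
    _ = a * dist x p + b * dist y q := by
        rw [dist_smul₀, dist_smul₀, Real.norm_eq_abs, Real.norm_eq_abs,
          abs_of_nonneg ha, abs_of_nonneg hb]
    _ = a * infDist x A + b * infDist y A := by rw [hxp, hyq]

/-- The key inequality: convex-combination inequality for the signed distance function of a
closed convex set with nonempty boundary, in the mixed case `x ∈ A`, `y ∉ A`. -/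
lemma sdist_comb_le_of_mem_not_mem (hconv : Convex ℝ A) (hcl : IsClosed A)
    (hne : A.Nonempty) (hnec : Aᶜ.Nonempty)
    {x y : E} (hx : x ∈ A) (hy : y ∉ A)
    {a b : ℝ} (ha : 0 ≤ a) (hb : 0 ≤ b) (hab : a + b = 1) :
    infDist (a • x + b • y) A - infDist (a • x + b • y) Aᶜ ≤
      a * (infDist x A - infDist x Aᶜ) + b * (infDist y A - infDist y Aᶜ) := by
  set z := a • x + b • y with hzdef
  have hxA : infDist x A = 0 := infDist_zero_of_mem hx
  have hyAc : infDist y Aᶜ = 0 := infDist_zero_of_mem (by exact hy)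
  set r : ℝ := infDist x Aᶜ with hrdef
  set s : ℝ := infDist y A with hsdef
  have hr0 : 0 ≤ r := infDist_nonneg
  have hs0 : 0 ≤ s := infDist_nonneg
  -- nearest point to y in A
  obtain ⟨y', hy', hyy'⟩ := hcl.exists_infDist_eq_dist hne y
  set z' : E := a • x + b • y' with hz'def
  have hz'A : z' ∈ A := hconv hx hy' ha hb hab
  have hdzz' : dist z z' = b * s := by
    rw [hzdef, hz'def, dist_eq_norm]
    have : a • x + b • y - (a • x + b • y') = b • (y - y') := by
      rw [smul_sub]; abel
    rw [this, norm_smul, Real.norm_eq_abs, abs_of_nonneg hb, hsdef, hyy', dist_eq_norm]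
  -- ball around z' of radius a * r is in A
  have hball : ∀ w : E, dist w z' < a * r → w ∈ A := by
    intro w hw
    rcases eq_or_lt_of_le ha with ha0 | ha0
    · exfalso
      rw [← ha0, zero_mul] at hw
      exact absurd hw (not_lt.2 dist_nonneg)
    · set x1 : E := x + a⁻¹ • (w - z') with hx1def
      have hx1 : x1 ∈ A := by
        refine mem_of_dist_lt_infDist_compl (x := x) ?_
        rw [hx1def, dist_eq_norm, add_sub_cancel_left, norm_smul, Real.norm_eq_abs,
          abs_of_nonneg (le_of_lt (inv_pos.2 ha0))]
        rw [dist_eq_norm] at hw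
        calc a⁻¹ * ‖w - z'‖ < a⁻¹ * (a * r) := by
              exact mul_lt_mul_of_pos_left hw (inv_pos.2 ha0)
          _ = r := by field_simp
      have : w = a • x1 + b • y' := by
        rw [hx1def, hz'def, smul_add, smul_smul, mul_inv_cancel₀ (ne_of_gt ha0), one_smul]
        abel
      rw [this]
      exact hconv hx1 hy' ha hb hab
  rw [hxA, hyAc, sub_zero, zero_sub, mul_neg]
  -- goal : infDist z A - infDist z Aᶜ ≤ -(a*r) + b*s
  by_cases hz : z ∈ A
  · rw [infDist_zero_of_mem hz, zero_sub, neg_le, neg_add, neg_neg]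
    -- goal : a*r - b*s ≤ infDist z Aᶜ  (written as a*r + -(b*s))
    rcases le_or_gt (a * r) (b * s) with hle | hlt
    · have : a * r + -(b * s) ≤ 0 := by linarith
      exact this.trans infDist_nonneg
    · by_contra hcon
      push_neg at hcon
      obtain ⟨w, hw, hwd⟩ := (infDist_lt_iff hnec).1 hcon
      have : dist w z' < a * r := by
        calc dist w z' ≤ dist w z + dist z z' := dist_triangle _ _ _
          _ = dist z w + b * s := by rw [dist_comm, hdzz']
          _ < a * r := by linarith
      exact hw (hball w this)
  · have hzc : infDist z Aᶜ = 0 := infDist_zero_of_mem (by exact hz)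
    rw [hzc, sub_zero]
    -- goal : infDist z A ≤ -(a*r) + b*s
    have har_le : a * r ≤ b * s := by
      by_contra hcon
      push_neg at hcon
      have : dist z z' < a * r := by rw [hdzz']; exact hcon
      exact hz (hball z this)
    rcases eq_or_lt_of_le (mul_nonneg ha hr0) with har0 | har0
    · calc infDist z A ≤ dist z z' := infDist_le_dist_of_mem hz'A
        _ = b * s := hdzz'
        _ = -(a * r) + b * s := by rw [← har0]; ring
    · have hbs0 : 0 < b * s := lt_of_lt_of_le har0 har_le
      set p : E := z' + ((a * r) / (b * s)) • (z - z') with hpdef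
      have hp_ball : p ∈ closedBall z' (a * r) := by
        rw [mem_closedBall, hpdef, dist_eq_norm, add_sub_cancel_left, norm_smul,
          Real.norm_eq_abs, abs_of_nonneg (le_of_lt (div_pos har0 hbs0))]
        have : ‖z - z'‖ = b * s := by rw [← dist_eq_norm, hdzz']
        rw [this]
        rw [div_mul_cancel₀ _ (ne_of_gt hbs0)]
      have hpA : p ∈ A := by
        have hsub : closedBall z' (a * r) ⊆ A := by
          rw [← closure_ball z' (ne_of_gt har0)]
          refine closure_minimal ?_ hcl
          intro w hw
          exact hball w (mem_ball.1 hw)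
        exact hsub hp_ball
      calc infDist z A ≤ dist z p := infDist_le_dist_of_mem hpA
        _ = -(a * r) + b * s := by
            rw [hpdef, dist_eq_norm]
            have : z - (z' + ((a * r) / (b * s)) • (z - z')) =
                (1 - (a * r) / (b * s)) • (z - z') := by
              rw [sub_smul, one_smul]; abel
            rw [this, norm_smul, Real.norm_eq_abs]
            have h1 : (0:ℝ) ≤ 1 - (a * r) / (b * s) := by
              rw [sub_nonneg, div_le_one hbs0]; exact har_le
            rw [abs_of_nonneg h1]
            have : ‖z - z'‖ = b * s := by rw [← dist_eq_norm, hdzz']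
            rw [this]
            rw [sub_mul, one_mul, div_mul_cancel₀ _ (ne_of_gt hbs0)]
            ring

/-- The full convex-combination inequality for the signed distance function. -/
lemma sdist_comb_le (hconv : Convex ℝ A) (hcl : IsClosed A)
    (hfr : (frontier A).Nonempty) (x y : E)
    {a b : ℝ} (ha : 0 ≤ a) (hb : 0 ≤ b) (hab : a + b = 1) :
    infDist (a • x + b • y) A - infDist (a • x + b • y) Aᶜ ≤
      a * (infDist x A - infDist x Aᶜ) + b * (infDist y A - infDist y Aᶜ) := by
  obtain ⟨w, hw⟩ := hfr
  have hne : A.Nonempty := by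
    have : w ∈ closure A := hw.1
    rcases A.eq_empty_or_nonempty with h | h
    · rw [h, closure_empty] at this; exact absurd this (Set.notMem_empty w)
    · exact h
  have hnec : Aᶜ.Nonempty := by
    have : w ∈ closure Aᶜ := by
      rw [frontier_eq_closure_inter_closure] at hw
      exact hw.2
    rcases Aᶜ.eq_empty_or_nonempty with h | h
    · rw [h, closure_empty] at this; exact absurd this (Set.notMem_empty w)
    · exact h
  by_cases hx : x ∈ A
  · by_cases hy : y ∈ A
    · -- both in A: concavity of distance to the complement
      have hz : a • x + b • y ∈ A := hconv hx hy ha hb hab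
      rw [infDist_zero_of_mem hx, infDist_zero_of_mem hy, infDist_zero_of_mem hz]
      simp only [zero_sub, mul_neg]
      rw [neg_le, neg_add, neg_neg, neg_neg]
      -- goal : a * infDist x Aᶜ + b * infDist y Aᶜ ≤ infDist (a•x+b•y) Aᶜ
      set r1 : ℝ := infDist x Aᶜ
      set r2 : ℝ := infDist y Aᶜ
      have hr1 : 0 ≤ r1 := infDist_nonneg
      have hr2 : 0 ≤ r2 := infDist_nonneg
      set S : ℝ := a * r1 + b * r2 with hSdef
      rcases eq_or_lt_of_le (add_nonneg (mul_nonneg ha hr1) (mul_nonneg hb hr2)) with hS0 | hS0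
      · rw [hSdef, ← hS0]; exact infDist_nonneg
      · have hSne : a * r1 + b * r2 ≠ 0 := ne_of_gt hS0
        by_contra hcon
        push_neg at hcon
        obtain ⟨v, hv, hvd⟩ := (infDist_lt_iff hnec).1 hcon
        -- show v ∈ A, contradiction
        set z := a • x + b • y with hzdef
        set x1 : E := x + (r1 / S) • (v - z) with hx1def
        set y1 : E := y + (r2 / S) • (v - z) with hy1def
        have hnormvz : ‖v - z‖ < S := by rw [← dist_eq_norm, dist_comm]; exact hvd
        have hx1A : x1 ∈ A := by
          rcases eq_or_lt_of_le hr1 with h1 | h1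
          · rw [hx1def, ← h1, zero_div, zero_smul, add_zero]; exact hx
          · refine mem_of_dist_lt_infDist_compl (x := x) ?_
            rw [hx1def, dist_eq_norm, add_sub_cancel_left, norm_smul, Real.norm_eq_abs,
              abs_of_nonneg (le_of_lt (div_pos h1 hS0))]
            calc r1 / S * ‖v - z‖ < r1 / S * S :=
                  mul_lt_mul_of_pos_left hnormvz (div_pos h1 hS0)
              _ = r1 := by exact div_mul_cancel₀ _ (ne_of_gt hS0)
        have hy1A : y1 ∈ A := by
          rcases eq_or_lt_of_le hr2 with h1 | h1
          · rw [hy1def, ← h1, zero_div, zero_smul, add_zero]; exact hy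
          · refine mem_of_dist_lt_infDist_compl (x := y) ?_
            rw [hy1def, dist_eq_norm, add_sub_cancel_left, norm_smul, Real.norm_eq_abs,
              abs_of_nonneg (le_of_lt (div_pos h1 hS0))]
            calc r2 / S * ‖v - z‖ < r2 / S * S :=
                  mul_lt_mul_of_pos_left hnormvz (div_pos h1 hS0)
              _ = r2 := by exact div_mul_cancel₀ _ (ne_of_gt hS0)
        have hcomb : v = a • x1 + b • y1 := by
          rw [hx1def, hy1def, smul_add, smul_add, smul_smul, smul_smul]
          have : a • x + b • y + ((a * (r1 / S)) • (v - z) + (b * (r2 / S)) • (v - z)) =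
              z + ((a * (r1 / S) + b * (r2 / S)) • (v - z)) := by
            rw [add_smul, hzdef]
          rw [show a • x + (a * (r1 / S)) • (v - z) + (b • y + (b * (r2 / S)) • (v - z)) =
              a • x + b • y + ((a * (r1 / S)) • (v - z) + (b * (r2 / S)) • (v - z)) by abel,
            this]
          have hcoef : a * (r1 / S) + b * (r2 / S) = 1 := by
            rw [hSdef]; field_simp
          rw [hcoef, one_smul, add_sub_cancel]
        exact hv (hcomb ▸ hconv hx1A hy1A ha hb hab)
    · exact sdist_comb_le_of_mem_not_mem hconv hcl hne hnec hx hy ha hb hab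
  · by_cases hy : y ∈ A
    · have := sdist_comb_le_of_mem_not_mem hconv hcl hne hnec hy hx hb ha
        (by linarith)
      rw [add_comm (b • y)] at this
      linarith
    · -- both outside A: convexity of distance to A
      have h1 : infDist x Aᶜ = 0 := infDist_zero_of_mem (by exact hx)
      have h2 : infDist y Aᶜ = 0 := infDist_zero_of_mem (by exact hy)
      rw [h1, h2, sub_zero, sub_zero]
      have := infDist_comb_le hconv hcl hne ha hb hab (x := x) (y := y)
      have h3 : 0 ≤ infDist (a • x + b • y) Aᶜ := infDist_nonneg
      linarith

end Helpers

theorem stmt18 {d : ℕ} {Ω : Type*} [MeasurableSpace Ω] (μ : Measure Ω)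
    [IsProbabilityMeasure μ] (RA : Ω → Set (EuclideanSpace ℝ (Fin d)))
    (hclosed : ∀ᵐ ω ∂μ, IsClosed (RA ω))
    (hbd : ∀ᵐ ω ∂μ, (frontier (RA ω)).Nonempty)
    (hconv : ∀ᵐ ω ∂μ, Convex ℝ (RA ω))
    (hint : ∀ x, Integrable (fun ω => bODF (RA ω) x) μ) :
    Convex ℝ {x | (∫ ω, bODF (RA ω) x ∂μ) ≤ 0} := by
  intro x hx y hy a b ha hb hab
  simp only [Set.mem_setOf_eq] at hx hy ⊢
  have hae : ∀ᵐ ω ∂μ, bODF (RA ω) (a • x + b • y) ≤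
      a * bODF (RA ω) x + b * bODF (RA ω) y := by
    filter_upwards [hclosed, hbd, hconv] with ω h1 h2 h3
    exact sdist_comb_le h3 h1 h2 x y ha hb hab
  have hint2 : Integrable (fun ω => a * bODF (RA ω) x + b * bODF (RA ω) y) μ :=
    ((hint x).const_mul a).add ((hint y).const_mul b)
  have key : (∫ ω, bODF (RA ω) (a • x + b • y) ∂μ) ≤
      a * (∫ ω, bODF (RA ω) x ∂μ) + b * (∫ ω, bODF (RA ω) y ∂μ) := by
    calc (∫ ω, bODF (RA ω) (a • x + b • y) ∂μ) ≤
        ∫ ω, (a * bODF (RA ω) x + b * bODF (RA ω) y) ∂μ :=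
          integral_mono_ae (hint _) hint2 hae
      _ = a * (∫ ω, bODF (RA ω) x ∂μ) + b * (∫ ω, bODF (RA ω) y ∂μ) := by
          rw [integral_add ((hint x).const_mul a) ((hint y).const_mul b),
            integral_const_mul, integral_const_mul]
  have : a * (∫ ω, bODF (RA ω) x ∂μ) + b * (∫ ω, bODF (RA ω) y ∂μ) ≤ 0 :=
    add_nonpos (mul_nonpos_of_nonneg_of_nonpos ha hx)
      (mul_nonpos_of_nonneg_of_nonpos hb hy)
  exact key.trans this
end

section
/- Let Θ be an integrable random vector in ℝ^p generating a separable random closed set 𝐀(Θ) whose ODF satisfies b_{𝐀}(x; Θ) = h(x)ᵀ g(Θ) almost surely, with each component g_i convex and E|g_i(Θ)| < ∞, and with h(x) having nonnegative components. Then the ODF expectation satisfies E[𝐀(Θ)] ⊆ A(E[Θ]), where A(θ) is the closed set with ODF h(x)ᵀ g(θ). Moreover, if each g_i is affine, then E[𝐀(Θ)] = A(E[Θ]). -/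
open MeasureTheory

theorem stmt19 {d p K : ℕ} {Ω : Type*} [MeasurableSpace Ω] (μ : Measure Ω)
    [IsProbabilityMeasure μ] (RA : Ω → Set (EuclideanSpace ℝ (Fin d)))
    (Θ : Ω → (Fin p → ℝ)) (hΘint : Integrable Θ μ)
    (h : EuclideanSpace ℝ (Fin d) → Fin K → ℝ)
    (g : (Fin p → ℝ) → Fin K → ℝ)
    (hclosed : ∀ᵐ ω ∂μ, IsClosed (RA ω))
    (hbd : ∀ᵐ ω ∂μ, (frontier (RA ω)).Nonempty)
    (hsep : ∀ᵐ ω ∂μ, ∀ x, bODF (RA ω) x = ∑ i, h x i * g (Θ ω) i)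
    (hgconv : ∀ i, ConvexOn ℝ Set.univ (fun θ => g θ i))
    (hgint : ∀ i, Integrable (fun ω => g (Θ ω) i) μ)
    (hnonneg : ∀ x i, 0 ≤ h x i) :
    {x | (∫ ω, bODF (RA ω) x ∂μ) ≤ 0} ⊆
      {x | (∑ i, h x i * g (fun j => ∫ ω, Θ ω j ∂μ) i) ≤ 0} ∧
    ((∀ i, ∃ (L : (Fin p → ℝ) →ₗ[ℝ] ℝ) (c : ℝ), ∀ θ, g θ i = L θ + c) →
      {x | (∫ ω, bODF (RA ω) x ∂μ) ≤ 0} =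
        {x | (∑ i, h x i * g (fun j => ∫ ω, Θ ω j ∂μ) i) ≤ 0}) := by
  have hmint : (fun j => ∫ ω, Θ ω j ∂μ) = ∫ ω, Θ ω ∂μ := by
    funext j
    exact (ContinuousLinearMap.proj (R := ℝ) (φ := fun _ : Fin p => ℝ)
      j).integral_comp_comm hΘint
  have hkey : ∀ x, (∫ ω, bODF (RA ω) x ∂μ) = ∑ i, h x i * ∫ ω, g (Θ ω) i ∂μ := by
    intro x
    have h1 : (∫ ω, bODF (RA ω) x ∂μ) = ∫ ω, ∑ i, h x i * g (Θ ω) i ∂μ := by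
      refine integral_congr_ae ?_
      filter_upwards [hsep] with ω hω using hω x
    rw [h1, integral_finset_sum _ (fun i _ => (hgint i).const_mul _)]
    exact Finset.sum_congr rfl fun i _ => integral_const_mul _ _
  have hJ : ∀ i, g (fun j => ∫ ω, Θ ω j ∂μ) i ≤ ∫ ω, g (Θ ω) i ∂μ := by
    intro i
    rw [hmint]
    exact (hgconv i).map_integral_le ((hgconv i).continuousOn isOpen_univ)
      isClosed_univ (Filter.Eventually.of_forall fun _ => Set.mem_univ _) hΘint (hgint i)
  constructor
  · intro x hx
    simp only [Set.mem_setOf_eq] at hx ⊢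
    calc ∑ i, h x i * g (fun j => ∫ ω, Θ ω j ∂μ) i
        ≤ ∑ i, h x i * ∫ ω, g (Θ ω) i ∂μ :=
          Finset.sum_le_sum fun i _ => mul_le_mul_of_nonneg_left (hJ i) (hnonneg x i)
      _ = ∫ ω, bODF (RA ω) x ∂μ := (hkey x).symm
      _ ≤ 0 := hx
  · intro haff
    have heq : ∀ i, g (fun j => ∫ ω, Θ ω j ∂μ) i = ∫ ω, g (Θ ω) i ∂μ := by
      intro i
      obtain ⟨L, c, hLc⟩ := haff i
      have hLint : ∫ ω, L (Θ ω) ∂μ = L (∫ ω, Θ ω ∂μ) :=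
        (LinearMap.toContinuousLinearMap L).integral_comp_comm hΘint
      have : (fun ω => g (Θ ω) i) = fun ω => L (Θ ω) + c := by
        funext ω; exact hLc (Θ ω)
      have hint : Integrable (fun ω => L (Θ ω)) μ :=
        (LinearMap.toContinuousLinearMap L).integrable_comp hΘint
      rw [this, hLc, hmint, integral_add hint (integrable_const c),
        hLint, integral_const, probReal_univ, one_smul]
    ext x
    simp only [Set.mem_setOf_eq, hkey x]
    constructor <;> intro hx
    · calc ∑ i, h x i * g (fun j => ∫ ω, Θ ω j ∂μ) i
          = ∑ i, h x i * ∫ ω, g (Θ ω) i ∂μ := by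
            exact Finset.sum_congr rfl fun i _ => by rw [heq i]
        _ ≤ 0 := hx
    · calc ∑ i, h x i * ∫ ω, g (Θ ω) i ∂μ
          = ∑ i, h x i * g (fun j => ∫ ω, Θ ω j ∂μ) i := by
            exact Finset.sum_congr rfl fun i _ => by rw [heq i]
        _ ≤ 0 := hx
end
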